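/- For Hermitian operators A and B on a finite-dimensional complex Hilbert space, the operator norm of e^{iA} - e^{iB} is at most the operator norm of A - B. -/

import Mathlib

/-!
The path `t ↦ exp (t • x) * exp ((1 - t) • y)` runs from `exp y` to `exp x` with derivative
`exp (t • x) * (x - y) * exp ((1 - t) • y)`. For skew-adjoint `x`, `y` both outer factors are
unitary, so in a C⋆-ring this derivative has norm exactly `‖x - y‖`, and the mean value
inequality gives `‖exp x - exp y‖ ≤ ‖x - y‖`. For Hermitian `A`, `B` apply this to `x = I • A`,
`y = I • B`.
-/

open scoped Matrix.Norms.L2Operator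
open NormedSpace Set

variable {𝔸 : Type*} [NormedRing 𝔸] [NormedAlgebra ℝ 𝔸] [CompleteSpace 𝔸]

theorem hasDerivAt_exp_smul_mul_exp_one_sub_smul (x y : 𝔸) (t : ℝ) :
    HasDerivAt (fun s : ℝ => exp (s • x) * exp ((1 - s) • y))
      (exp (t • x) * (x - y) * exp ((1 - t) • y)) t := by
  have hy : HasDerivAt (fun s : ℝ => exp ((1 - s) • y)) (-(y * exp ((1 - t) • y))) t :=
    (hasDerivAt_exp_smul_const' y (1 - t)).scomp t ((hasDerivAt_id t).const_sub 1)
      |>.congr_deriv (neg_one_smul ℝ _)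
  exact (hasDerivAt_exp_smul_const x t).mul hy |>.congr_deriv (by noncomm_ring)

variable [StarRing 𝔸] [CStarRing 𝔸] [StarModule ℝ 𝔸]

theorem exp_smul_mem_unitary_of_mem_skewAdjoint {x : 𝔸} (hx : x ∈ skewAdjoint 𝔸) (t : ℝ) :
    exp (t • x) ∈ unitary 𝔸 :=
  let +nondep : NormedAlgebra ℚ 𝔸 := .restrictScalars ℚ ℝ 𝔸
  exp_mem_unitary_of_mem_skewAdjoint (skewAdjoint.smul_mem t hx)

theorem norm_exp_sub_exp_le_of_mem_skewAdjoint {x y : 𝔸} (hx : x ∈ skewAdjoint 𝔸)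
    (hy : y ∈ skewAdjoint 𝔸) : ‖exp x - exp y‖ ≤ ‖x - y‖ := by
  have hderiv := fun t (_ : t ∈ Icc (0 : ℝ) 1) ↦
    (hasDerivAt_exp_smul_mul_exp_one_sub_smul x y t).hasDerivWithinAt (s := Icc 0 1)
  have hbound (t : ℝ) : ‖exp (t • x) * (x - y) * exp ((1 - t) • y)‖ = ‖x - y‖ := by
    rw [CStarRing.norm_mul_mem_unitary _ (exp_smul_mem_unitary_of_mem_skewAdjoint hy _),
      CStarRing.norm_mem_unitary_mul _ (exp_smul_mem_unitary_of_mem_skewAdjoint hx t)]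
  simpa using norm_image_sub_le_of_norm_deriv_le_segment_01' hderiv fun t _ ↦ (hbound t).le

/-- **Lipschitz continuity of `e^{iX}` in the Hermitian generator.**
For Hermitian operators `A`, `B` on a finite-dimensional complex Hilbert space (represented as
matrices, with `‖·‖` the L2 operator norm), `‖e^{iA} - e^{iB}‖ ≤ ‖A - B‖`. -/
theorem norm_exp_I_smul_sub_exp_I_smul_le {N : ℕ}
    (A B : Matrix (Fin N) (Fin N) ℂ) (hA : A.IsHermitian) (hB : B.IsHermitian) :
    ‖NormedSpace.exp (Complex.I • A) - NormedSpace.exp (Complex.I • B)‖ ≤ ‖A - B‖ := by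
  have hIA : Complex.I • A ∈ skewAdjoint _ := hA.isSelfAdjoint.I_smul_mem_skewAdjoint (K := ℂ)
  have hIB : Complex.I • B ∈ skewAdjoint _ := hB.isSelfAdjoint.I_smul_mem_skewAdjoint (K := ℂ)
  calc ‖exp (Complex.I • A) - exp (Complex.I • B)‖
      ≤ ‖Complex.I • A - Complex.I • B‖ := norm_exp_sub_exp_le_of_mem_skewAdjoint hIA hIB
    _ = ‖A - B‖ := by rw [← smul_sub, norm_smul, Complex.norm_I, one_mul]
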